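/- arXiv:1408.4339 — 2 statements merged into one kernel-verified Lean document; each statement's English description precedes it below -/
import Mathlib

section
/- Let v be an A_1 weight on ℝⁿ. There exists a constant c depending only on the dimension n (and not on [v]_{A_1}) such that for every f ∈ L^1(ℝⁿ), ‖M(f)/v‖_{L^{1,∞}(v)} ≤ c·[v]_{A_1}·‖f‖_{L^1(ℝⁿ)}, i.e. sup_{t>0} t·v({x ∈ ℝⁿ : M f(x) > t v(x)}) ≤ c [v]_{A_1} ∫_{ℝⁿ} |f| dx. -/
open MeasureTheory ENNReal Set Filter

noncomputable section

/-- Points of `ℝⁿ`. -/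
abbrev Rn (n : ℕ) := Fin n → ℝ

/-- Axis-parallel (closed) cubes in `ℝⁿ`. -/
def IsCube {n : ℕ} (Q : Set (Rn n)) : Prop :=
  ∃ (c : Rn n) (l : ℝ), 0 < l ∧ Q = Set.Icc c (fun i => c i + l)

/-- Dyadic cubes in `ℝⁿ`. -/
def IsDyadicCube {n : ℕ} (Q : Set (Rn n)) : Prop :=
  ∃ (k : ℤ) (m : Fin n → ℤ),
    Q = {x : Rn n | ∀ i, (m i : ℝ) * 2 ^ (-k) ≤ x i ∧ x i < ((m i : ℝ) + 1) * 2 ^ (-k)}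

/-- A weight: a nonnegative locally integrable (measurable) function. -/
def IsWeight {n : ℕ} (w : Rn n → ℝ) : Prop :=
  Measurable w ∧ (∀ x, 0 ≤ w x) ∧ LocallyIntegrable w volume

/-- `w(E) = ∫_E w dx`. -/
def wMeas {n : ℕ} (w : Rn n → ℝ) (E : Set (Rn n)) : ℝ≥0∞ :=
  ∫⁻ x in E, ENNReal.ofReal (w x)

/-- The average `|Q|⁻¹ ∫_Q w`. -/
def avgE {n : ℕ} (w : Rn n → ℝ) (Q : Set (Rn n)) : ℝ≥0∞ :=
  (volume Q)⁻¹ * ∫⁻ x in Q, ENNReal.ofReal (w x)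

/-- The `A_1` quantity of `w` over a cube `Q`. -/
def A1Q {n : ℕ} (w : Rn n → ℝ) (Q : Set (Rn n)) : ℝ≥0∞ :=
  avgE w Q * (essInf (fun x => ENNReal.ofReal (w x)) (volume.restrict Q))⁻¹

/-- The `A_p` quantity of `w` over a cube `Q` (`1 ≤ p < ∞`); note `1 - p/(p-1) = 1 - p'`. -/
def ApQ {n : ℕ} (p : ℝ) (w : Rn n → ℝ) (Q : Set (Rn n)) : ℝ≥0∞ :=
  if p = 1 then A1Q w Q
  else avgE w Q *
    ((volume Q)⁻¹ * ∫⁻ x in Q, ENNReal.ofReal (w x) ^ (1 - p / (p - 1))) ^ (p - 1)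

/-- The `A_p` constant `[w]_{A_p}` (supremum over all cubes). -/
def ApConst {n : ℕ} (p : ℝ) (w : Rn n → ℝ) : ℝ≥0∞ :=
  ⨆ (Q : Set (Rn n)) (_ : IsCube Q), ApQ p w Q

/-- The `A_1` constant `[w]_{A_1}`. -/
def A1Const {n : ℕ} (w : Rn n → ℝ) : ℝ≥0∞ := ApConst 1 w

/-- The Hardy-Littlewood maximal operator (over all cubes containing `x`). -/
def maxOp {n : ℕ} (f : Rn n → ℝ) (x : Rn n) : ℝ≥0∞ :=
  ⨆ (Q : Set (Rn n)) (_ : IsCube Q) (_ : x ∈ Q), avgE (fun y => |f y|) Q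

/-- The dyadic maximal operator (over dyadic cubes containing `x`). -/
def dyadicMaxOp {n : ℕ} (f : Rn n → ℝ) (x : Rn n) : ℝ≥0∞ :=
  ⨆ (Q : Set (Rn n)) (_ : IsDyadicCube Q) (_ : x ∈ Q), avgE (fun y => |f y|) Q

/-- The Fujii–Wilson `A_∞` constant `[w]_{A_∞} = sup_Q w(Q)⁻¹ ∫_Q M(χ_Q w)`. -/
def AinftyConst {n : ℕ} (w : Rn n → ℝ) : ℝ≥0∞ :=
  ⨆ (Q : Set (Rn n)) (_ : IsCube Q),
    (wMeas w Q)⁻¹ * ∫⁻ x in Q, maxOp (Q.indicator w) x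

/-- `‖f‖_{L¹(w)} = ∫ |f| w dx`. -/
def L1w {n : ℕ} (w f : Rn n → ℝ) : ℝ≥0∞ :=
  ∫⁻ x, ENNReal.ofReal |f x| * ENNReal.ofReal (w x)

/-! If `M f (x) > t v(x)`, some cube `Q ∋ x` has `t v(x) < ⨍_Q |f|`. Up to a null set of `x`,
`ess inf_{4Q} v ≤ ess inf_Q v ≤ v(x)`, so the `A_1` condition on the enlarged cube `4Q` gives
`t v(4Q) ≤ 4ⁿ [v]_{A_1} t |Q| v(x) ≤ 4ⁿ [v]_{A_1} ∫_Q |f|`. Vitali's covering lemma selects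
disjoint such cubes whose enlargements cover the level set, and summing over them gives the
bound with `c = 4ⁿ`. -/

open Metric Topology

theorem measure_biUnion_closedBall_le_of_enlargement {α ι : Type*} [PseudoMetricSpace α]
    [MeasurableSpace α] [OpensMeasurableSpace α] [Countable ι] (ρ ν : Measure α)
    (T : Set ι) (c : ι → α) (r : ι → ℝ) (κ : ℝ≥0∞)
    (hT : ∀ p ∈ T, ρ (closedBall (c p) (4 * r p)) ≤ κ * ν (closedBall (c p) (r p))) :
    ρ (⋃ p ∈ T, closedBall (c p) (r p)) ≤ κ * ν univ := by
  -- Vitali's lemma needs bounded radii, so exhaust `T` by the subfamilies with `r ≤ N`.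
  set T' : ℕ → Set ι := fun N => {p ∈ T | r p ≤ N}
  have hbounded (N : ℕ) : ρ (⋃ p ∈ T' N, closedBall (c p) (r p)) ≤ κ * ν univ := by
    obtain ⟨u, huT, hdisj, hcover⟩ :=
      Vitali.exists_disjoint_subfamily_covering_enlargement_closedBall (T' N) c r N
        (fun p hp => hp.2) 4 (by norm_num)
    calc ρ (⋃ p ∈ T' N, closedBall (c p) (r p))
        ≤ ρ (⋃ b ∈ u, closedBall (c b) (4 * r b)) := by
          refine measure_mono (iUnion₂_subset fun p hp => ?_)
          obtain ⟨b, hb, hsub⟩ := hcover p hp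
          exact hsub.trans (subset_biUnion_of_mem (u := fun b => closedBall (c b) (4 * r b)) hb)
      _ ≤ ∑' b : u, ρ (closedBall (c b) (4 * r b)) := measure_biUnion_le ρ u.to_countable _
      _ ≤ ∑' b : u, κ * ν (closedBall (c b) (r b)) :=
          ENNReal.tsum_le_tsum fun b => hT b (huT b.2).1
      _ = κ * ν (⋃ b ∈ u, closedBall (c b) (r b)) := by
          rw [ENNReal.tsum_mul_left,
            measure_biUnion u.to_countable hdisj fun _ _ => measurableSet_closedBall]
      _ ≤ κ * ν univ := by gcongr; exact subset_univ _
  have hmono : Monotone fun N => ⋃ p ∈ T' N, closedBall (c p) (r p) :=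
    fun N M hNM => biUnion_mono (fun p hp => ⟨hp.1, hp.2.trans (by exact_mod_cast hNM)⟩)
      fun _ _ => subset_rfl
  have hunion : ⋃ p ∈ T, closedBall (c p) (r p) = ⋃ N, ⋃ p ∈ T' N, closedBall (c p) (r p) := by
    refine subset_antisymm (iUnion₂_subset fun p hp => ?_)
      (iUnion_subset fun N => biUnion_mono (fun p hp => hp.1) fun _ _ => subset_rfl)
    obtain ⟨N, hN⟩ := exists_nat_ge (r p)
    exact subset_iUnion_of_subset N
      (subset_biUnion_of_mem (u := fun p => closedBall (c p) (r p)) ⟨hp, hN⟩)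
  rw [hunion, hmono.measure_iUnion]
  exact iSup_le hbounded

theorem pi_closedBall_eq_Icc {ι : Type*} [Fintype ι] (z : ι → ℝ) {r : ℝ} (hr : 0 ≤ r) :
    closedBall z r = Icc (fun i => z i - r) (fun i => z i + r) := by
  rw [closedBall_pi _ hr, ← pi_univ_Icc]
  simp only [Real.closedBall_eq_Icc]

theorem isCube_closedBall {n : ℕ} (z : Rn n) {r : ℝ} (hr : 0 < r) :
    IsCube (closedBall z r) := by
  refine ⟨fun i => z i - r, 2 * r, by positivity, ?_⟩
  rw [pi_closedBall_eq_Icc z hr.le]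
  congr 1
  ext i
  ring

theorem IsCube.exists_eq_closedBall {n : ℕ} {Q : Set (Rn n)} (hQ : IsCube Q) :
    ∃ z r, 0 < r ∧ Q = closedBall z r := by
  obtain ⟨c, l, hl, rfl⟩ := hQ
  refine ⟨fun i => c i + l / 2, l / 2, by positivity, ?_⟩
  rw [pi_closedBall_eq_Icc _ (by positivity)]
  congr 1 <;> ext i <;> ring

theorem A1Q_le_A1Const {n : ℕ} {v : Rn n → ℝ} {Q : Set (Rn n)} (hQ : IsCube Q) :
    A1Q v Q ≤ A1Const v :=
  le_iSup₂_of_le (f := fun Q (_ : IsCube Q) => ApQ 1 v Q) Q hQ (by simp [ApQ])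

theorem wMeas_closedBall_le {n : ℕ} {v : Rn n → ℝ} (hA : A1Const v ≠ ∞) (z : Rn n) {r : ℝ}
    (hr : 0 < r)
    (he : essInf (fun x => ENNReal.ofReal (v x)) (volume.restrict (closedBall z r)) ≠ ∞) :
    wMeas v (closedBall z r) ≤ A1Const v * volume (closedBall z r) *
      essInf (fun x => ENNReal.ofReal (v x)) (volume.restrict (closedBall z r)) := by
  have hvol0 : volume (closedBall z r) ≠ 0 := (measure_closedBall_pos volume z hr).ne'
  have hvol : volume (closedBall z r) ≠ ∞ := measure_closedBall_lt_top.ne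
  have havg : avgE v (closedBall z r) ≤ A1Const v *
      essInf (fun x => ENNReal.ofReal (v x)) (volume.restrict (closedBall z r)) :=
    (ENNReal.div_le_iff_le_mul (Or.inr hA) (Or.inl he)).1 (A1Q_le_A1Const (isCube_closedBall z hr))
  calc wMeas v (closedBall z r) = volume (closedBall z r) * avgE v (closedBall z r) := by
        rw [avgE, ← mul_assoc, ENNReal.mul_inv_cancel hvol0 hvol, one_mul, wMeas]
    _ ≤ _ := by rw [mul_comm (A1Const v), mul_assoc]; gcongr

theorem volume_closedBall_four_mul {n : ℕ} (z : Rn n) {r : ℝ} (hr : 0 ≤ r) :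
    volume (closedBall z (4 * r)) = 4 ^ n * volume (closedBall z r) := by
  rw [Real.volume_pi_closedBall _ hr, Real.volume_pi_closedBall _ (by positivity),
    Fintype.card_fin, show 2 * (4 * r) = 4 * (2 * r) by ring, mul_pow,
    ENNReal.ofReal_mul (by positivity), ENNReal.ofReal_pow (by norm_num)]
  norm_num

theorem ofReal_mul_wMeas_closedBall_four_mul_le {n : ℕ} {v : Rn n → ℝ} (hA : A1Const v ≠ ∞)
    (g : Rn n → ℝ) (z : Rn n) {r : ℝ} (hr : 0 < r) {t s : ℝ}
    (hs : essInf (fun x => ENNReal.ofReal (v x)) (volume.restrict (closedBall z r))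
      ≤ ENNReal.ofReal s)
    (havg : ENNReal.ofReal t * ENNReal.ofReal s ≤ avgE g (closedBall z r)) :
    ENNReal.ofReal t * wMeas v (closedBall z (4 * r)) ≤
      4 ^ n * A1Const v * ∫⁻ y in closedBall z r, ENNReal.ofReal (g y) := by
  have hess : essInf (fun x => ENNReal.ofReal (v x)) (volume.restrict (closedBall z (4 * r)))
      ≤ ENNReal.ofReal s :=
    (essInf_antitone_measure (Measure.restrict_mono
      (closedBall_subset_closedBall (by linarith)) le_rfl).absolutelyContinuous).trans hs
  have hvol0 : volume (closedBall z r) ≠ 0 := (measure_closedBall_pos volume z hr).ne'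
  have hvol : volume (closedBall z r) ≠ ∞ := measure_closedBall_lt_top.ne
  have hint : volume (closedBall z r) * (ENNReal.ofReal t * ENNReal.ofReal s) ≤
      ∫⁻ y in closedBall z r, ENNReal.ofReal (g y) := by
    calc _ ≤ volume (closedBall z r) * avgE g (closedBall z r) := by gcongr
      _ = _ := by rw [avgE, ← mul_assoc, ENNReal.mul_inv_cancel hvol0 hvol, one_mul]
  calc ENNReal.ofReal t * wMeas v (closedBall z (4 * r))
      ≤ ENNReal.ofReal t * (A1Const v * volume (closedBall z (4 * r)) *
          essInf (fun x => ENNReal.ofReal (v x)) (volume.restrict (closedBall z (4 * r)))) := by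
        gcongr
        exact wMeas_closedBall_le hA z (by positivity) (ne_top_of_le_ne_top ofReal_ne_top hess)
    _ ≤ ENNReal.ofReal t * (A1Const v * (4 ^ n * volume (closedBall z r)) * ENNReal.ofReal s) := by
        rw [volume_closedBall_four_mul z hr.le]
        gcongr
    _ = 4 ^ n * A1Const v * (volume (closedBall z r) * (ENNReal.ofReal t * ENNReal.ofReal s)) := by
        ring
    _ ≤ _ := by gcongr

def belowEssInf {n : ℕ} (v : Rn n → ℝ) (Q : Set (Rn n)) : Set (Rn n) :=
  {y ∈ Q | ENNReal.ofReal (v y) < essInf (fun x => ENNReal.ofReal (v x)) (volume.restrict Q)}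

theorem volume_belowEssInf {n : ℕ} (v : Rn n → ℝ) {Q : Set (Rn n)} (hQ : MeasurableSet Q) :
    volume (belowEssInf v Q) = 0 := by
  have h := meas_lt_essInf (μ := volume.restrict Q) (f := fun x => ENNReal.ofReal (v x))
  rwa [Measure.restrict_apply' hQ, inter_comm] at h

def ratCenter {n : ℕ} (p : (Fin n → ℚ) × ℚ) : Rn n := fun i => (p.1 i : ℝ)

def ratBall {n : ℕ} (p : (Fin n → ℚ) × ℚ) : Set (Rn n) := closedBall (ratCenter p) p.2

theorem exists_ratBall_lt_avgE {n : ℕ} (g : Rn n → ℝ) {x z : Rn n} {r : ℝ}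
    (hr : 0 < r) (hx : x ∈ closedBall z r) {a : ℝ≥0∞} (ha : a < avgE g (closedBall z r)) :
    ∃ p : (Fin n → ℚ) × ℚ, 0 < (p.2 : ℝ) ∧ x ∈ ratBall p ∧ a < avgE g (ratBall p) := by
  set J := ∫⁻ y in closedBall z r, ENNReal.ofReal (g y)
  have hlim : Tendsto (fun δ : ℝ => (ENNReal.ofReal ((2 * (r + 2 * δ)) ^ n))⁻¹ * J) (𝓝 0)
      (𝓝 (avgE g (closedBall z r))) := by
    have hcont : Continuous fun δ : ℝ => (ENNReal.ofReal ((2 * (r + 2 * δ)) ^ n))⁻¹ :=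
      continuous_inv.comp (ENNReal.continuous_ofReal.comp (by fun_prop))
    have h := ENNReal.Tendsto.mul_const (hcont.tendsto 0) (b := J)
      (Or.inl (ENNReal.inv_ne_zero.2 ofReal_ne_top))
    simpa [avgE, Real.volume_pi_closedBall _ hr.le] using h
  obtain ⟨δ, hδa, hδ⟩ := (((hlim.mono_left nhdsWithin_le_nhds).eventually
    (eventually_gt_nhds ha)).and (self_mem_nhdsWithin (s := Ioi 0))).exists
  choose q hq using fun i => exists_rat_btwn (show z i - δ < z i by linarith)
  obtain ⟨s, hs⟩ := exists_rat_btwn (show r + δ < r + 2 * δ by linarith)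
  have hdist : dist (ratCenter (q, s)) z < δ := by
    refine (dist_pi_lt_iff hδ).2 fun i => ?_
    rw [ratCenter, Real.dist_eq, abs_sub_lt_iff]
    exact ⟨by linarith [(hq i).2], by linarith [(hq i).1]⟩
  have hsub : closedBall z r ⊆ closedBall (ratCenter (q, s)) s := fun y hy => by
    rw [mem_closedBall] at hy ⊢
    linarith [dist_triangle y z (ratCenter (q, s)), dist_comm z (ratCenter (q, s)), hs.1]
  refine ⟨(q, s), by dsimp only; linarith [hs.1], hsub hx, hδa.trans_le ?_⟩
  rw [avgE, ratBall, Real.volume_pi_closedBall _ (by dsimp only; linarith [hs.1]), Fintype.card_fin]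
  exact mul_le_mul' (ENNReal.inv_le_inv.2 (ENNReal.ofReal_le_ofReal
    (pow_le_pow_left₀ (by linarith [hs.1]) (by linarith [hs.2]) n))) (lintegral_mono_set hsub)

def ratBallsWithLargeAverage {n : ℕ} (v f : Rn n → ℝ) (t : ℝ) : Set ((Fin n → ℚ) × ℚ) :=
  {p | 0 < (p.2 : ℝ) ∧ ∃ s : ℝ,
    essInf (fun x => ENNReal.ofReal (v x)) (volume.restrict (ratBall p)) ≤ ENNReal.ofReal s ∧
    ENNReal.ofReal t * ENNReal.ofReal s ≤ avgE (fun y => |f y|) (ratBall p)}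

-- The rational balls form a countable family, so the first union is a null set.
theorem setOf_lt_maxOp_subset {n : ℕ} (v f : Rn n → ℝ) {t : ℝ} (ht : 0 ≤ t) :
    {x | ENNReal.ofReal (t * v x) < maxOp f x} ⊆
      (⋃ p, belowEssInf v (ratBall p)) ∪ ⋃ p ∈ ratBallsWithLargeAverage v f t, ratBall p := by
  intro x hx
  by_cases hxB : x ∈ ⋃ p, belowEssInf v (ratBall p)
  · exact Or.inl hxB
  simp only [mem_ofPred_eq, maxOp, lt_iSup_iff] at hx
  obtain ⟨Q, hQ, hxQ, hlt⟩ := hx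
  obtain ⟨z, r, hr, rfl⟩ := hQ.exists_eq_closedBall
  obtain ⟨p, hp, hxp, havg⟩ := exists_ratBall_lt_avgE _ hr hxQ hlt
  refine Or.inr (mem_biUnion ⟨hp, v x, not_lt.1 fun h => hxB (mem_iUnion.2 ⟨p, hxp, h⟩), ?_⟩ hxp)
  rw [← ENNReal.ofReal_mul ht]
  exact havg.le

/-- If `v ∈ A_1` on `ℝⁿ`, then there is a dimensional constant `c`
(independent of `[v]_{A_1}`) with `‖M(f)/v‖_{L^{1,∞}(v)} ≤ c [v]_{A_1} ‖f‖_{L¹(ℝⁿ)}`. -/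
theorem stmt1 (n : ℕ) :
    ∃ c : ℝ≥0∞, c ≠ ∞ ∧
      ∀ v : Rn n → ℝ, IsWeight v → A1Const v ≠ ∞ →
        ∀ f : Rn n → ℝ, Integrable f volume →
          ∀ t : ℝ, 0 < t →
            ENNReal.ofReal t * wMeas v {x | ENNReal.ofReal (t * v x) < maxOp f x} ≤
              c * A1Const v * ∫⁻ x, ENNReal.ofReal |f x| := by
  refine ⟨4 ^ n, pow_ne_top ofNat_ne_top, fun v _ hA f _ t ht => ?_⟩
  set ρ := ENNReal.ofReal t • volume.withDensity fun x => ENNReal.ofReal (v x)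
  set ν := volume.withDensity fun x => ENNReal.ofReal |f x|
  set B := ⋃ p, belowEssInf v (ratBall p)
  set T := ratBallsWithLargeAverage v f t
  have hB : volume B = 0 :=
    measure_iUnion_null fun p => volume_belowEssInf v measurableSet_closedBall
  have hρB : ρ B = 0 := by
    rw [Measure.smul_apply, withDensity_absolutelyContinuous _ _ hB, smul_zero]
  have hT : ∀ p ∈ T,
      ρ (closedBall (ratCenter p) (4 * p.2)) ≤ 4 ^ n * A1Const v * ν (ratBall p) := by
    rintro p ⟨hp, s, hs, havg⟩
    rw [Measure.smul_apply, smul_eq_mul, withDensity_apply', withDensity_apply']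
    exact ofReal_mul_wMeas_closedBall_four_mul_le hA _ _ hp hs havg
  calc ENNReal.ofReal t * wMeas v {x | ENNReal.ofReal (t * v x) < maxOp f x}
      = ρ {x | ENNReal.ofReal (t * v x) < maxOp f x} := by
        rw [Measure.smul_apply, smul_eq_mul, withDensity_apply', wMeas]
    _ ≤ ρ B + ρ (⋃ p ∈ T, ratBall p) :=
        (measure_mono (setOf_lt_maxOp_subset v f ht.le)).trans (measure_union_le _ _)
    _ ≤ 4 ^ n * A1Const v * ν univ := by
        rw [hρB, zero_add]
        exact measure_biUnion_closedBall_le_of_enlargement ρ ν T ratCenter _ _ hT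
    _ = 4 ^ n * A1Const v * ∫⁻ x, ENNReal.ofReal |f x| := by
        rw [withDensity_apply', Measure.restrict_univ]
end
end

section
/- If u ∈ A_1 on ℝⁿ and v ∈ A_∞(u), then the product uv ∈ A_∞. In particular, if v ∈ A_p(u) for some 1 ≤ p < ∞, then uv ∈ A_p. -/
open MeasureTheory ENNReal Set Filter

noncomputable section

/-- The weighted maximal operator `M_u f(x) = sup_{Q ∋ x} u(Q)⁻¹ ∫_Q |f| u`. -/
def wMaxOp {n : ℕ} (u f : Rn n → ℝ) (x : Rn n) : ℝ≥0∞ :=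
  ⨆ (Q : Set (Rn n)) (_ : IsCube Q) (_ : x ∈ Q),
    (wMeas u Q)⁻¹ * ∫⁻ y in Q, ENNReal.ofReal |f y| * ENNReal.ofReal (u y)

/-- `v ∈ A_p(u)`, the Muckenhoupt class with respect to the measure `u dx`; for `p = 1` this
means `M_u v ≤ C v` a.e. -/
def MemApU {n : ℕ} (p : ℝ) (u v : Rn n → ℝ) : Prop :=
  if p = 1 then
    ∃ C : ℝ≥0∞, C ≠ ∞ ∧ ∀ᵐ x : Rn n, wMaxOp u v x ≤ C * ENNReal.ofReal (v x)
  else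
    ∃ C : ℝ≥0∞, C ≠ ∞ ∧ ∀ Q : Set (Rn n), IsCube Q →
      ((wMeas u Q)⁻¹ * ∫⁻ x in Q, ENNReal.ofReal (v x) * ENNReal.ofReal (u x)) *
        ((wMeas u Q)⁻¹ *
            ∫⁻ x in Q, ENNReal.ofReal (v x) ^ (1 - p / (p - 1)) * ENNReal.ofReal (u x))
          ^ (p - 1) ≤ C

/-- `v ∈ A_∞(u) = ⋃_{p ≥ 1} A_p(u)`. -/
def MemAinftyU {n : ℕ} (u v : Rn n → ℝ) : Prop :=
  ∃ p : ℝ, 1 ≤ p ∧ MemApU p u v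

/-!
On a cube `Q` with `u(Q) > 0` let `ε = ess inf_Q u`; the `A₁` condition gives `ε > 0` and
`u_Q / ε ≤ [u]_{A₁}` (cubes with `u(Q) = 0` carry no mass of `uv`). The average of `uv` over `Q`
is `u_Q` times the `u`-average of `v`. For `p > 1` the exponent `r = 1 - p'` is negative, so
`u ≥ ε` gives `(uv)^r ≤ ε^(r-1) · v^r u`, and since `(r - 1)(p - 1) = -p` the `A_p` quantity of `uv`
on `Q` is at most `(u_Q / ε)^p` times the `A_p(u)` quantity of `v`. For `p = 1`, on `Q` the
`u`-average of `v` is at most `M_u v ≤ C v`, so `ε` times it is at most `C · ess inf_Q (uv)`.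
Either way `[uv]_{A_p} ≤ [u]_{A₁}^p [v]_{A_p(u)}`.
-/

namespace ENNReal

lemma rpow_le_rpow_of_nonpos {x y : ℝ≥0∞} {z : ℝ} (hxy : x ≤ y) (hz : z ≤ 0) :
    y ^ z ≤ x ^ z := by
  rw [← neg_neg z, rpow_neg x, rpow_neg y, ENNReal.inv_le_inv]
  exact rpow_le_rpow hxy (neg_nonneg.2 hz)

lemma mul_rpow_le_rpow_sub_one_mul {a b c : ℝ≥0∞} {r : ℝ} (hr : r ≤ 1) (hc : c ≠ 0)
    (hca : c ≤ a) (ha : a ≠ ∞) (hb : b ≠ ∞) : (a * b) ^ r ≤ c ^ (r - 1) * (b ^ r * a) := by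
  have ha0 : a ≠ 0 := ne_bot_of_le_ne_bot hc hca
  calc (a * b) ^ r = a ^ (r - 1 + 1) * b ^ r := by rw [sub_add_cancel, mul_rpow_of_ne_top ha hb]
    _ = a ^ (r - 1) * (b ^ r * a) := by rw [rpow_add _ _ ha0 ha, rpow_one]; ring
    _ ≤ c ^ (r - 1) * (b ^ r * a) :=
        mul_le_mul_left (rpow_le_rpow_of_nonpos hca (sub_nonpos.2 hr)) _

lemma le_mul_essInf_of_ae_le_mul {α : Type*} [MeasurableSpace α] {μ : Measure α} [NeZero μ]
    {f : α → ℝ≥0∞} {a C : ℝ≥0∞} (hC : C ≠ ∞) (h : ∀ᵐ x ∂μ, a ≤ C * f x) :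
    a ≤ C * essInf f μ := by
  rcases eq_or_ne C 0 with rfl | hC0
  · obtain ⟨x, hx⟩ := h.exists
    simpa using hx
  · rw [← ENNReal.inv_mul_le_iff hC0 hC]
    refine le_essInf_of_ae_le _ ?_
    filter_upwards [h] with x hx
    rwa [ENNReal.inv_mul_le_iff hC0 hC]

lemma essInf_ofReal_ne_top {α : Type*} [MeasurableSpace α] {μ : Measure α} [NeZero μ]
    (f : α → ℝ) : essInf (fun x => ENNReal.ofReal (f x)) μ ≠ ∞ := by
  obtain ⟨x, hx⟩ := (ae_essInf_le (f := fun x => ENNReal.ofReal (f x)) (μ := μ)).exists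
  exact ne_top_of_le_ne_top ofReal_ne_top hx

end ENNReal

namespace IsCube

variable {n : ℕ} {Q : Set (Rn n)}

lemma volume_eq (hQ : IsCube Q) : ∃ l : ℝ, 0 < l ∧ volume Q = ENNReal.ofReal l ^ n := by
  obtain ⟨c, l, hl, rfl⟩ := hQ
  exact ⟨l, hl, by simp [Real.volume_Icc_pi]⟩

lemma volume_ne_zero (hQ : IsCube Q) : volume Q ≠ 0 := by
  obtain ⟨l, hl, hvol⟩ := hQ.volume_eq
  rw [hvol]
  exact pow_ne_zero _ (ENNReal.ofReal_pos.2 hl).ne'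

lemma volume_ne_top (hQ : IsCube Q) : volume Q ≠ ∞ := by
  obtain ⟨l, -, hvol⟩ := hQ.volume_eq
  rw [hvol]
  exact pow_ne_top ofReal_ne_top

lemma isCompact (hQ : IsCube Q) : IsCompact Q := by
  obtain ⟨c, l, -, rfl⟩ := hQ
  exact isCompact_Icc

lemma measurableSet (hQ : IsCube Q) : MeasurableSet Q := by
  obtain ⟨c, l, -, rfl⟩ := hQ
  exact measurableSet_Icc

lemma neZero_restrict (hQ : IsCube Q) : NeZero (volume.restrict Q) :=
  ⟨by simpa [Measure.restrict_eq_zero] using hQ.volume_ne_zero⟩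

end IsCube

def wAvg {n : ℕ} (u : Rn n → ℝ) (g : Rn n → ℝ≥0∞) (Q : Set (Rn n)) : ℝ≥0∞ :=
  (wMeas u Q)⁻¹ * ∫⁻ x in Q, g x * ENNReal.ofReal (u x)

def essInfOn {n : ℕ} (w : Rn n → ℝ) (Q : Set (Rn n)) : ℝ≥0∞ :=
  essInf (fun x => ENNReal.ofReal (w x)) (volume.restrict Q)

section Weights

variable {n : ℕ} {u v : Rn n → ℝ} {Q : Set (Rn n)}

lemma wMeas_ne_top (hu : LocallyIntegrable u volume) (hQ : IsCube Q) : wMeas u Q ≠ ∞ :=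
  (hu.integrableOn_isCompact hQ.isCompact).lintegral_lt_top.ne

lemma avgE_mul_inv_essInfOn_le_A1Const (hQ : IsCube Q) :
    avgE u Q * (essInfOn u Q)⁻¹ ≤ A1Const u :=
  le_iSup₂_of_le (f := fun (R : Set (Rn n)) (_ : IsCube R) => ApQ 1 u R) Q hQ
    (by simp [ApQ, A1Q, essInfOn])

lemma essInfOn_ne_zero (hu1 : A1Const u ≠ ∞) (hQ : IsCube Q) (hQ0 : wMeas u Q ≠ 0) :
    essInfOn u Q ≠ 0 := by
  intro h
  have havg : avgE u Q ≠ 0 := mul_ne_zero (ENNReal.inv_ne_zero.2 hQ.volume_ne_top) hQ0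
  have := avgE_mul_inv_essInfOn_le_A1Const (u := u) hQ
  rw [h, ENNReal.inv_zero, ENNReal.mul_top havg, top_le_iff] at this
  exact hu1 this

lemma essInfOn_le_ae (Q : Set (Rn n)) :
    ∀ᵐ x ∂volume.restrict Q, essInfOn u Q ≤ ENNReal.ofReal (u x) :=
  ae_essInf_le

lemma wAvg_le_wMaxOp (hQ : IsCube Q) {x : Rn n} (hx : x ∈ Q) :
    wAvg u (fun y => ENNReal.ofReal (v y)) Q ≤ wMaxOp u v x := by
  refine le_iSup₂_of_le Q hQ (le_iSup_of_le hx ?_)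
  unfold wAvg
  gcongr with y
  exact ENNReal.ofReal_le_ofReal (le_abs_self _)

lemma inv_volume_mul_lintegral_eq_avgE_mul_wAvg (hQ0 : wMeas u Q ≠ 0) (hQt : wMeas u Q ≠ ∞)
    (g : Rn n → ℝ≥0∞) :
    (volume Q)⁻¹ * ∫⁻ x in Q, g x * ENNReal.ofReal (u x) = avgE u Q * wAvg u g Q := by
  change _ = (volume Q)⁻¹ * wMeas u Q * ((wMeas u Q)⁻¹ * _)
  rw [mul_assoc, ← mul_assoc (wMeas u Q), ENNReal.mul_inv_cancel hQ0 hQt, one_mul]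

lemma avgE_mul_eq (hu : ∀ x, 0 ≤ u x) (hQ0 : wMeas u Q ≠ 0) (hQt : wMeas u Q ≠ ∞) :
    avgE (fun x => u x * v x) Q = avgE u Q * wAvg u (fun x => ENNReal.ofReal (v x)) Q := by
  rw [← inv_volume_mul_lintegral_eq_avgE_mul_wAvg hQ0 hQt, avgE]
  congr 1
  exact lintegral_congr fun x => by rw [ENNReal.ofReal_mul (hu x), mul_comm]

lemma avgE_mul_eq_zero (hu : Measurable u) (hu0 : ∀ x, 0 ≤ u x) (hQ0 : wMeas u Q = 0) :
    avgE (fun x => u x * v x) Q = 0 := by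
  have hu_ae : (fun x => ENNReal.ofReal (u x)) =ᵐ[volume.restrict Q] 0 :=
    (lintegral_eq_zero_iff hu.ennreal_ofReal).1 hQ0
  rw [avgE, lintegral_congr_ae (g := fun _ => 0), lintegral_zero, mul_zero]
  filter_upwards [hu_ae] with x hx
  simp only [Pi.zero_apply] at hx ⊢
  rw [ENNReal.ofReal_mul (hu0 x), hx, zero_mul]

lemma ApQ_eq_zero_of_avgE_eq_zero {w : Rn n → ℝ} (p : ℝ) (h : avgE w Q = 0) : ApQ p w Q = 0 := by
  unfold ApQ A1Q
  split_ifs <;> simp [h]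

lemma ApConst_mul_le_of_forall_cube (hu : IsWeight u) {p : ℝ} {B : ℝ≥0∞}
    (h : ∀ Q, IsCube Q → wMeas u Q ≠ 0 → ApQ p (fun x => u x * v x) Q ≤ B) :
    ApConst p (fun x => u x * v x) ≤ B := by
  refine iSup₂_le fun Q hQ => ?_
  by_cases hQ0 : wMeas u Q = 0
  · rw [ApQ_eq_zero_of_avgE_eq_zero p (avgE_mul_eq_zero hu.1 hu.2.1 hQ0)]
    exact zero_le
  · exact h Q hQ hQ0

lemma ApQ_one_mul_le (hu : IsWeight u) (hu1 : A1Const u ≠ ∞) (hQ : IsCube Q)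
    (hQ0 : wMeas u Q ≠ 0) {C : ℝ≥0∞} (hC : C ≠ ∞)
    (hv : ∀ᵐ x, wMaxOp u v x ≤ C * ENNReal.ofReal (v x)) :
    ApQ 1 (fun x => u x * v x) Q ≤ A1Const u * C := by
  have := hQ.neZero_restrict
  set ε := essInfOn u Q
  set X := wAvg u (fun x => ENNReal.ofReal (v x)) Q
  set m := essInfOn (fun x => u x * v x) Q
  have hε0 : ε ≠ 0 := essInfOn_ne_zero hu1 hQ hQ0
  have hεt : ε ≠ ∞ := ENNReal.essInf_ofReal_ne_top u
  have hεX : ε * X ≤ C * m := by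
    refine ENNReal.le_mul_essInf_of_ae_le_mul hC ?_
    filter_upwards [ae_restrict_of_ae hv, ae_restrict_mem hQ.measurableSet,
      essInfOn_le_ae Q] with x hvx hxQ hux
    calc ε * X ≤ ENNReal.ofReal (u x) * (C * ENNReal.ofReal (v x)) :=
          mul_le_mul' hux ((wAvg_le_wMaxOp hQ hxQ).trans hvx)
      _ = C * ENNReal.ofReal (u x * v x) := by rw [ENNReal.ofReal_mul (hu.2.1 x)]; ring
  rw [ApQ, if_pos rfl, A1Q, avgE_mul_eq hu.2.1 hQ0 (wMeas_ne_top hu.2.2 hQ)]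
  calc avgE u Q * X * m⁻¹ = avgE u Q * ε⁻¹ * (ε * X) * m⁻¹ := by
        congr 1
        rw [mul_assoc, ← mul_assoc ε⁻¹, ENNReal.inv_mul_cancel hε0 hεt, one_mul]
    _ ≤ A1Const u * (C * m) * m⁻¹ := by
        gcongr
        exact avgE_mul_inv_essInfOn_le_A1Const hQ
    _ ≤ A1Const u * C := by
        rw [← mul_assoc, mul_assoc]
        exact mul_le_of_le_one_right' (ENNReal.mul_inv_le_one m)

lemma inv_volume_mul_lintegral_mul_rpow_le (hu : IsWeight u) (hu1 : A1Const u ≠ ∞)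
    (hQ : IsCube Q) (hQ0 : wMeas u Q ≠ 0) {r : ℝ} (hr : r ≤ 1) :
    (volume Q)⁻¹ * ∫⁻ x in Q, ENNReal.ofReal (u x * v x) ^ r ≤
      essInfOn u Q ^ (r - 1) * (avgE u Q * wAvg u (fun x => ENNReal.ofReal (v x) ^ r) Q) := by
  have := hQ.neZero_restrict
  set ε := essInfOn u Q
  have hε0 : ε ≠ 0 := essInfOn_ne_zero hu1 hQ hQ0
  have hεt : ε ^ (r - 1) ≠ ∞ :=
    ENNReal.rpow_ne_top_of_ne_zero hε0 (ENNReal.essInf_ofReal_ne_top u)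
  have hpt : ∀ᵐ x ∂volume.restrict Q, ENNReal.ofReal (u x * v x) ^ r ≤
      ε ^ (r - 1) * (ENNReal.ofReal (v x) ^ r * ENNReal.ofReal (u x)) := by
    filter_upwards [essInfOn_le_ae Q] with x hux
    rw [ENNReal.ofReal_mul (hu.2.1 x)]
    exact ENNReal.mul_rpow_le_rpow_sub_one_mul hr hε0 hux ENNReal.ofReal_ne_top
      ENNReal.ofReal_ne_top
  calc (volume Q)⁻¹ * ∫⁻ x in Q, ENNReal.ofReal (u x * v x) ^ r
      ≤ (volume Q)⁻¹ * ∫⁻ x in Q, ε ^ (r - 1) *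
          (ENNReal.ofReal (v x) ^ r * ENNReal.ofReal (u x)) := by
        gcongr _ * ?_
        exact lintegral_mono_ae hpt
    _ = ε ^ (r - 1) * ((volume Q)⁻¹ *
          ∫⁻ x in Q, ENNReal.ofReal (v x) ^ r * ENNReal.ofReal (u x)) := by
        rw [lintegral_const_mul' _ _ hεt]
        ring
    _ = ε ^ (r - 1) * (avgE u Q * wAvg u (fun x => ENNReal.ofReal (v x) ^ r) Q) := by
        rw [inv_volume_mul_lintegral_eq_avgE_mul_wAvg hQ0 (wMeas_ne_top hu.2.2 hQ)]

lemma ApQ_mul_le (hu : IsWeight u) (hu1 : A1Const u ≠ ∞) {p : ℝ} (hp : 1 < p) (hQ : IsCube Q)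
    (hQ0 : wMeas u Q ≠ 0) :
    ApQ p (fun x => u x * v x) Q ≤ A1Const u ^ p *
      (wAvg u (fun x => ENNReal.ofReal (v x)) Q *
        wAvg u (fun x => ENNReal.ofReal (v x) ^ (1 - p / (p - 1))) Q ^ (p - 1)) := by
  set r := 1 - p / (p - 1)
  set ε := essInfOn u Q
  set X := wAvg u (fun x => ENNReal.ofReal (v x)) Q
  set Y := wAvg u (fun x => ENNReal.ofReal (v x) ^ r) Q
  have hp1 : 0 ≤ p - 1 := by linarith
  have hr : r ≤ 1 := by
    have : 0 < p / (p - 1) := div_pos (by linarith) (by linarith)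
    linarith
  have hrp : (r - 1) * (p - 1) = -p := by
    simp only [r]
    field_simp [show p - 1 ≠ 0 by linarith]
    ring
  have hpow : avgE u Q * avgE u Q ^ (p - 1) * (ε ^ (r - 1)) ^ (p - 1) =
      (avgE u Q * ε⁻¹) ^ p := by
    have hsplit : avgE u Q ^ p = avgE u Q * avgE u Q ^ (p - 1) := by
      conv_lhs => rw [← add_sub_cancel 1 p]
      rw [ENNReal.rpow_add_of_nonneg _ _ zero_le_one hp1, ENNReal.rpow_one]
    rw [← ENNReal.rpow_mul, hrp, ENNReal.mul_rpow_of_nonneg _ _ (by linarith : (0 : ℝ) ≤ p),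
      ENNReal.inv_rpow, ← ENNReal.rpow_neg, hsplit]
  rw [ApQ, if_neg hp.ne', avgE_mul_eq hu.2.1 hQ0 (wMeas_ne_top hu.2.2 hQ)]
  calc avgE u Q * X * ((volume Q)⁻¹ * ∫⁻ x in Q, ENNReal.ofReal (u x * v x) ^ r) ^ (p - 1)
      ≤ avgE u Q * X * (ε ^ (r - 1) * (avgE u Q * Y)) ^ (p - 1) := by
        gcongr _ * ?_ ^ _
        exact inv_volume_mul_lintegral_mul_rpow_le hu hu1 hQ hQ0 hr
    _ = (avgE u Q * ε⁻¹) ^ p * (X * Y ^ (p - 1)) := by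
        rw [ENNReal.mul_rpow_of_nonneg _ _ hp1, ENNReal.mul_rpow_of_nonneg _ _ hp1, ← hpow]
        ring
    _ ≤ A1Const u ^ p * (X * Y ^ (p - 1)) := by
        gcongr
        exact avgE_mul_inv_essInfOn_le_A1Const hQ

theorem ApConst_mul_ne_top_of_memApU (hu : IsWeight u) (hu1 : A1Const u ≠ ∞) {p : ℝ}
    (hp : 1 ≤ p) (hv : MemApU p u v) : ApConst p (fun x => u x * v x) ≠ ∞ := by
  rcases hp.eq_or_lt with rfl | hp
  · rw [MemApU, if_pos rfl] at hv
    obtain ⟨C, hC, hCv⟩ := hv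
    refine ne_top_of_le_ne_top (ENNReal.mul_ne_top hu1 hC) ?_
    exact ApConst_mul_le_of_forall_cube hu fun Q hQ hQ0 => ApQ_one_mul_le hu hu1 hQ hQ0 hC hCv
  · rw [MemApU, if_neg hp.ne'] at hv
    obtain ⟨C, hC, hCv⟩ := hv
    refine ne_top_of_le_ne_top
      (ENNReal.mul_ne_top (ENNReal.rpow_ne_top_of_nonneg (by linarith) hu1) hC) ?_
    exact ApConst_mul_le_of_forall_cube hu fun Q hQ hQ0 =>
      (ApQ_mul_le hu hu1 hp hQ hQ0).trans (mul_le_mul_right (hCv Q hQ) _)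

end Weights

theorem stmt16_general (n : ℕ) (u v : Rn n → ℝ) (hu : IsWeight u)
    (hu1 : A1Const u ≠ ∞) :
    (MemAinftyU u v → ∃ q : ℝ, 1 ≤ q ∧ ApConst q (fun x => u x * v x) ≠ ∞) ∧
    (∀ p : ℝ, 1 ≤ p → MemApU p u v → ApConst p (fun x => u x * v x) ≠ ∞) :=
  ⟨fun ⟨p, hp, hv⟩ => ⟨p, hp, ApConst_mul_ne_top_of_memApU hu hu1 hp hv⟩,
    fun _ hp hv => ApConst_mul_ne_top_of_memApU hu hu1 hp hv⟩

/-- If `u ∈ A_1` on `ℝⁿ` and `v ∈ A_∞(u)`, then `uv ∈ A_∞`; in particular, if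
`v ∈ A_p(u)` for some `1 ≤ p < ∞`, then `uv ∈ A_p`. -/
theorem stmt16 (n : ℕ) (u v : Rn n → ℝ) (hu : IsWeight u) (hv : IsWeight v)
    (hu1 : A1Const u ≠ ∞) :
    (MemAinftyU u v → ∃ q : ℝ, 1 ≤ q ∧ ApConst q (fun x => u x * v x) ≠ ∞) ∧
    (∀ p : ℝ, 1 ≤ p → MemApU p u v → ApConst p (fun x => u x * v x) ≠ ∞) :=
  stmt16_general n u v hu hu1
end
end
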